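/- Let r > 0, T > 0, and set A₁ := 1 + 2r − 2√(r² + r), B₁ := 1 + 2r + 2√(r² + r), and κ := √(r² + r). Then the function y(t) := A₁·B₁·(e^{κ(T − t)} − 1)/(B₁·e^{κ(T − t)} − A₁) is the unique differentiable solution on [0,T] of the terminal value problem y'(t) + ¼(A₁ − y(t))(B₁ − y(t)) = 0, y(T) = 0; moreover 0 ≤ y(t) < A₁ for all t ∈ [0,T] and y is nonincreasing on [0,T]. -/

import Mathlib

/-!
With `κ = (b - a) / 4`, the quotient `a b (E - 1) / (b E - a)`, `E = e^{κ (T - t)}`, solves the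
Riccati equation `y' = -¼ (a - y)(b - y)` wherever its denominator is nonzero: indeed
`a - y = a (b - a) / (b E - a)` and `b - y = b E (b - a) / (b E - a)`, while `E' = -κ E`.
For `0 < a < b` and `t ≤ T` we have `E ≥ 1`, so the denominator is positive, `0 ≤ y < a`, and
`y' < 0`. Since `r² + r > 0`, `A₁ = 1 + 2r - 2κ` and `B₁ = 1 + 2r + 2κ` satisfy `0 < A₁ < B₁`
and `B₁ - A₁ = 4κ`. Uniqueness holds because the right-hand side is a polynomial, hence
Lipschitz on the compact set of values taken by two solutions, and Grönwall's inequality applies.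
-/

/-- The explicit solution `y(t) = A₁B₁(e^{κ(T−t)} − 1)/(B₁e^{κ(T−t)} − A₁)` of the terminal
value problem `y' + ¼(A₁ − y)(B₁ − y) = 0, y(T) = 0`, with `κ = √(r² + r)`,
`A₁ = 1 + 2r − 2κ`, `B₁ = 1 + 2r + 2κ`. -/
noncomputable def ricY (r T t : ℝ) : ℝ :=
  (1 + 2 * r - 2 * Real.sqrt (r ^ 2 + r)) * (1 + 2 * r + 2 * Real.sqrt (r ^ 2 + r)) *
      (Real.exp (Real.sqrt (r ^ 2 + r) * (T - t)) - 1) /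
    ((1 + 2 * r + 2 * Real.sqrt (r ^ 2 + r)) * Real.exp (Real.sqrt (r ^ 2 + r) * (T - t)) -
      (1 + 2 * r - 2 * Real.sqrt (r ^ 2 + r)))

open Set Real

section AutonomousODE

variable {E : Type*} [NormedAddCommGroup E] [NormedSpace ℝ E]

theorem eqOn_Icc_of_hasDerivWithinAt_of_locallyLipschitz {v : E → E} (hv : LocallyLipschitz v)
    {f g : ℝ → E} {a b : ℝ}
    (hf : ∀ t ∈ Icc a b, HasDerivWithinAt f (v (f t)) (Icc a b) t)
    (hg : ∀ t ∈ Icc a b, HasDerivWithinAt g (v (g t)) (Icc a b) t)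
    (hb : f b = g b) : EqOn f g (Icc a b) := by
  have hf_cont : ContinuousOn f (Icc a b) := fun t ht => (hf t ht).continuousWithinAt
  have hg_cont : ContinuousOn g (Icc a b) := fun t ht => (hg t ht).continuousWithinAt
  have hK : IsCompact (f '' Icc a b ∪ g '' Icc a b) :=
    (isCompact_Icc.image_of_continuousOn hf_cont).union
      (isCompact_Icc.image_of_continuousOn hg_cont)
  obtain ⟨L, hL⟩ := hv.locallyLipschitzOn.exists_lipschitzOnWith_of_compact hK
  have left_deriv {h : ℝ → E} (hh : ∀ t ∈ Icc a b, HasDerivWithinAt h (v (h t)) (Icc a b) t)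
      (t : ℝ) (ht : t ∈ Ioc a b) : HasDerivWithinAt h (v (h t)) (Iic t) t :=
    (hh t (Ioc_subset_Icc_self ht)).mono_of_mem_nhdsWithin (Icc_mem_nhdsLE_of_mem ht)
  exact ODE_solution_unique_of_mem_Icc_left (v := fun _ => v) (fun _ _ => hL)
    hf_cont (left_deriv hf) (fun t ht => .inl (mem_image_of_mem f (Ioc_subset_Icc_self ht)))
    hg_cont (left_deriv hg) (fun t ht => .inr (mem_image_of_mem g (Ioc_subset_Icc_self ht))) hb

end AutonomousODE

noncomputable def riccatiSolution (a b T t : ℝ) : ℝ :=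
  a * b * (exp ((b - a) / 4 * (T - t)) - 1) / (b * exp ((b - a) / 4 * (T - t)) - a)

theorem one_le_exp_mul_sub {κ t T : ℝ} (hκ : 0 ≤ κ) (ht : t ≤ T) : 1 ≤ exp (κ * (T - t)) :=
  one_le_exp (mul_nonneg hκ (sub_nonneg.2 ht))

section riccatiSolution

variable {a b T t : ℝ}

theorem riccatiSolution_self : riccatiSolution a b T T = 0 := by
  simp [riccatiSolution]

theorem hasDerivAt_riccatiSolution (h : b * exp ((b - a) / 4 * (T - t)) - a ≠ 0) :
    HasDerivAt (riccatiSolution a b T)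
      (-(1 / 4 * (a - riccatiSolution a b T t) * (b - riccatiSolution a b T t))) t := by
  have hexp : HasDerivAt (fun s => exp ((b - a) / 4 * (T - s)))
      (exp ((b - a) / 4 * (T - t)) * -((b - a) / 4)) t := by
    simpa using (((hasDerivAt_id t).const_sub T).const_mul ((b - a) / 4)).exp
  refine (((hexp.sub_const 1).const_mul (a * b)).div ((hexp.const_mul b).sub_const a) h).congr_deriv
    ?_
  simp only [riccatiSolution]
  generalize exp ((b - a) / 4 * (T - t)) = E at h ⊢
  field_simp
  ring

variable (ha : 0 < a) (hab : a < b)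
include ha hab

theorem riccatiSolution_denom_pos (ht : t ≤ T) : 0 < b * exp ((b - a) / 4 * (T - t)) - a := by
  nlinarith [one_le_exp_mul_sub (by linarith : 0 ≤ (b - a) / 4) ht]

theorem riccatiSolution_nonneg (ht : t ≤ T) : 0 ≤ riccatiSolution a b T t :=
  div_nonneg
    (mul_nonneg (mul_pos ha (ha.trans hab)).le
      (sub_nonneg.2 (one_le_exp_mul_sub (by linarith : 0 ≤ (b - a) / 4) ht)))
    (riccatiSolution_denom_pos ha hab ht).le

theorem riccatiSolution_lt (ht : t ≤ T) : riccatiSolution a b T t < a := by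
  rw [riccatiSolution, div_lt_iff₀ (riccatiSolution_denom_pos ha hab ht)]
  nlinarith [exp_pos ((b - a) / 4 * (T - t))]

theorem antitoneOn_riccatiSolution : AntitoneOn (riccatiSolution a b T) (Iic T) := by
  have hderiv (t : ℝ) (ht : t ≤ T) :=
    hasDerivAt_riccatiSolution (riccatiSolution_denom_pos ha hab ht).ne'
  refine antitoneOn_of_hasDerivWithinAt_nonpos (convex_Iic T)
    (fun t ht => (hderiv t ht).continuousAt.continuousWithinAt)
    (fun t ht => (hderiv t (interior_subset ht : t ∈ Iic T)).hasDerivWithinAt) fun t ht => ?_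
  have := riccatiSolution_lt ha hab (interior_subset ht : t ∈ Iic T)
  nlinarith

end riccatiSolution

theorem ricY_eq_riccatiSolution (r T : ℝ) :
    ricY r T = riccatiSolution (1 + 2 * r - 2 * √(r ^ 2 + r)) (1 + 2 * r + 2 * √(r ^ 2 + r)) T := by
  funext t
  rw [riccatiSolution, show (1 + 2 * r + 2 * √(r ^ 2 + r) - (1 + 2 * r - 2 * √(r ^ 2 + r))) / 4
    = √(r ^ 2 + r) by ring]
  rfl

theorem two_mul_sqrt_sq_add_self_lt {r : ℝ} (hr : 0 ≤ r) : 2 * √(r ^ 2 + r) < 1 + 2 * r := by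
  have : √(r ^ 2 + r) < (1 + 2 * r) / 2 := (sqrt_lt' (by linarith)).2 (by nlinarith)
  linarith

theorem ricY_unique_solution_general (r T : ℝ) (hr : 0 < r) :
    (∀ t ∈ Set.Icc (0 : ℝ) T,
      HasDerivWithinAt (ricY r T)
        (-((1 / 4) * ((1 + 2 * r - 2 * Real.sqrt (r ^ 2 + r)) - ricY r T t) *
          ((1 + 2 * r + 2 * Real.sqrt (r ^ 2 + r)) - ricY r T t)))
        (Set.Icc 0 T) t) ∧
    ricY r T T = 0 ∧
    (∀ y y' : ℝ → ℝ,
      (∀ t ∈ Set.Icc (0 : ℝ) T, HasDerivWithinAt y (y' t) (Set.Icc 0 T) t) →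
      (∀ t ∈ Set.Icc (0 : ℝ) T,
        y' t + (1 / 4) * ((1 + 2 * r - 2 * Real.sqrt (r ^ 2 + r)) - y t) *
          ((1 + 2 * r + 2 * Real.sqrt (r ^ 2 + r)) - y t) = 0) →
      y T = 0 →
      ∀ t ∈ Set.Icc (0 : ℝ) T, y t = ricY r T t) ∧
    (∀ t ∈ Set.Icc (0 : ℝ) T,
      0 ≤ ricY r T t ∧ ricY r T t < 1 + 2 * r - 2 * Real.sqrt (r ^ 2 + r)) ∧
    AntitoneOn (ricY r T) (Set.Icc 0 T) := by
  set A := 1 + 2 * r - 2 * √(r ^ 2 + r)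
  set B := 1 + 2 * r + 2 * √(r ^ 2 + r)
  have hA : 0 < A := by linarith [two_mul_sqrt_sq_add_self_lt hr.le]
  have hAB : A < B := by linarith [sqrt_pos.2 (by positivity : 0 < r ^ 2 + r)]
  rw [ricY_eq_riccatiSolution]
  have hderiv (t : ℝ) (ht : t ∈ Icc 0 T) :=
    (hasDerivAt_riccatiSolution (riccatiSolution_denom_pos hA hAB ht.2).ne').hasDerivWithinAt
      (s := Icc 0 T)
  refine ⟨hderiv, riccatiSolution_self, fun y y' hy hy_ode hyT => ?_,
    fun t ht => ⟨riccatiSolution_nonneg hA hAB ht.2, riccatiSolution_lt hA hAB ht.2⟩,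
    (antitoneOn_riccatiSolution hA hAB).mono fun _ ht => ht.2⟩
  refine eqOn_Icc_of_hasDerivWithinAt_of_locallyLipschitz
    (v := fun x => -(1 / 4 * (A - x) * (B - x)))
    (ContDiff.locallyLipschitz (by fun_prop)) (fun t ht => ?_) hderiv
    (hyT.trans riccatiSolution_self.symm)
  exact eq_neg_of_add_eq_zero_left (hy_ode t ht) ▸ hy t ht

/-- `ricY r T` is the unique differentiable solution on `[0, T]` of
`y' + ¼(A₁ − y)(B₁ − y) = 0`, `y(T) = 0`; moreover `0 ≤ y(t) < A₁` on `[0, T]` and `y` is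
nonincreasing on `[0, T]`. -/
theorem ricY_unique_solution (r T : ℝ) (hr : 0 < r) (hT : 0 < T) :
    (∀ t ∈ Set.Icc (0 : ℝ) T,
      HasDerivWithinAt (ricY r T)
        (-((1 / 4) * ((1 + 2 * r - 2 * Real.sqrt (r ^ 2 + r)) - ricY r T t) *
          ((1 + 2 * r + 2 * Real.sqrt (r ^ 2 + r)) - ricY r T t)))
        (Set.Icc 0 T) t) ∧
    ricY r T T = 0 ∧
    (∀ y y' : ℝ → ℝ,
      (∀ t ∈ Set.Icc (0 : ℝ) T, HasDerivWithinAt y (y' t) (Set.Icc 0 T) t) →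
      (∀ t ∈ Set.Icc (0 : ℝ) T,
        y' t + (1 / 4) * ((1 + 2 * r - 2 * Real.sqrt (r ^ 2 + r)) - y t) *
          ((1 + 2 * r + 2 * Real.sqrt (r ^ 2 + r)) - y t) = 0) →
      y T = 0 →
      ∀ t ∈ Set.Icc (0 : ℝ) T, y t = ricY r T t) ∧
    (∀ t ∈ Set.Icc (0 : ℝ) T,
      0 ≤ ricY r T t ∧ ricY r T t < 1 + 2 * r - 2 * Real.sqrt (r ^ 2 + r)) ∧
    AntitoneOn (ricY r T) (Set.Icc 0 T) :=
  ricY_unique_solution_general r T hr
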